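/- Let λ̄ > 0, d ≥ 2, and for each integer k ≥ 1 let σ_k = k(k+d−2) and d_k := 1 − 1/(σ_k − λ̃) > 0 for a fixed λ̃ < 0. Suppose p_k: [0,1] → ℝ solves −(1/r^{d-1})(r^{d-1} p_k')' + (σ_k/r² − λ̄) p_k = 0 on (0,1) with p_k'(1) + d_k p_k(1) = c_k, where the boundary data c_k are uniformly bounded in k. If moreover λ̄ is bounded above by a constant Λ, then there exists C > 0 (depending only on d, Λ, sup_k |c_k|, and λ̃) such that |p_k(r)| ≤ C for all r ∈ (0,1) and all k large enough; in particular sup_k sup_{(0,1)} |p_k| < ∞. -/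

import Mathlib

/-!
Write `L` for the radial operator `-r^{1-d} (r^{d-1} f')' + (σ_k / r² - λ̄) f`. Its values on the
barriers, `L(r²) = σ_k - 2d - λ̄ r²` and `L(r⁻¹) = (σ_k + d - 3 - λ̄ r²) / r³`, are positive for
large `k`, so `w = p_k + C r² + ε r⁻¹` satisfies `L w > 0` on `(0, 1)`. Hence `w` has no negative
minimum: not inside, where `w < 0`, `w' = 0` and `w'' ≥ 0` would give `L w < 0`; not at `r = 1` once
`C ≥ sup |c_k| / d_k`, by the Robin condition; and not near `0`, where `ε r⁻¹` blows up.
Letting `ε → 0` gives `p_k ≥ -C r²`, and likewise for `-p_k`. The finitely many remaining `k`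
are bounded by continuity on `[0, 1]`.
-/

open Set

noncomputable section

/-- σ_k = k(k + d − 2), the k-th Laplace–Beltrami eigenvalue of 𝕊^{d-1}. -/
def sigmaLB (d k : ℕ) : ℝ := (k : ℝ) * ((k : ℝ) + (d : ℝ) - 2)

open Filter Topology

theorem IsLocalMin.deriv_deriv_nonneg {f : ℝ → ℝ} {x : ℝ} (h : IsLocalMin f x)
    (hf : ∀ᶠ y in 𝓝 x, DifferentiableAt ℝ f y) : 0 ≤ deriv (deriv f) x := by
  by_contra! hneg
  have hright : ∀ᶠ y in 𝓝[>] x, deriv f y < 0 :=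
    deriv_neg_right_of_sign_deriv <| nhdsWithin_le_nhds <|
      eventually_nhdsWithin_sign_eq_of_deriv_neg hneg h.deriv_eq_zero
  obtain ⟨u, hxu, hu⟩ := mem_nhdsGT_iff_exists_Ioo_subset.1
    (hright.and ((hf.filter_mono nhdsWithin_le_nhds).and (h.filter_mono nhdsWithin_le_nhds)))
  obtain ⟨y, hxy, hyu⟩ := exists_between (mem_Ioi.1 hxu)
  have hanti : StrictAntiOn f (Icc x y) := by
    refine strictAntiOn_of_deriv_neg (convex_Icc x y) (fun z hz => ?_) fun z hz => ?_
    · rcases hz.1.eq_or_lt with rfl | hxz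
      · exact hf.self_of_nhds.continuousAt.continuousWithinAt
      · exact (hu ⟨hxz, hz.2.trans_lt hyu⟩).2.1.continuousAt.continuousWithinAt
    · rw [interior_Icc] at hz
      exact (hu ⟨hz.1, hz.2.trans hyu⟩).1
  exact (hanti (left_mem_Icc.2 hxy.le) (right_mem_Icc.2 hxy.le) hxy).not_ge (hu ⟨hxy, hyu⟩).2.2

theorem deriv_nonpos_of_eventually_le_nhdsLT {f : ℝ → ℝ} {a : ℝ}
    (h : ∀ᶠ x in 𝓝[<] a, f a ≤ f x) : deriv f a ≤ 0 := by
  by_cases hf : DifferentiableAt ℝ f a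
  · refine le_of_tendsto (hasDerivAt_iff_tendsto_slope_left_right.1 hf.hasDerivAt).1 ?_
    filter_upwards [h, self_mem_nhdsWithin] with x hx hxa
    rw [slope_def_field]
    exact div_nonpos_of_nonneg_of_nonpos (sub_nonneg.2 hx) (sub_nonpos.2 (le_of_lt hxa))
  · rw [deriv_zero_of_not_differentiableAt hf]

theorem nonneg_on_Ioc_of_isLocalMin_nonneg {w : ℝ → ℝ} {a b : ℝ} (hw : ContinuousOn w (Ioc a b))
    (hleft : ∀ᶠ r in 𝓝[>] a, 0 < w r) (hint : ∀ r ∈ Ioo a b, IsLocalMin w r → 0 ≤ w r)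
    (hright : (∀ᶠ r in 𝓝[<] b, w b ≤ w r) → 0 ≤ w b) :
    ∀ r ∈ Ioc a b, 0 ≤ w r := by
  intro r hr
  by_contra! hneg
  obtain ⟨u, hau, hu⟩ := mem_nhdsGT_iff_exists_Ioo_subset.1 hleft
  obtain ⟨δ, haδ, hδu⟩ := exists_between (mem_Ioi.1 hau)
  have hδr : δ ≤ r := hδu.le.trans (not_lt.1 fun hru => (hu ⟨hr.1, hru⟩).not_ge hneg.le)
  obtain ⟨m, hm, hmin⟩ := isCompact_Icc.exists_isMinOn (nonempty_Icc.2 (hδr.trans hr.2))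
    (hw.mono fun x hx => ⟨haδ.trans_le hx.1, hx.2⟩)
  have hwm : w m < 0 := (hmin ⟨hδr, hr.2⟩).trans_lt hneg
  have hδm : δ < m := hm.1.lt_of_ne fun h => (hu ⟨haδ, hδu⟩).not_ge (h ▸ hwm.le)
  rcases hm.2.lt_or_eq with hmb | rfl
  · exact hwm.not_ge (hint m ⟨haδ.trans hδm, hmb⟩ (hmin.isLocalMin (Icc_mem_nhds hδm hmb)))
  · refine hwm.not_ge (hright ?_)
    filter_upwards [Ioo_mem_nhdsLT hδm] with x hx using hmin ⟨hx.1.le, hx.2.le⟩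

def radialOp (n : ℕ) (σ lam : ℝ) (f : ℝ → ℝ) (r : ℝ) : ℝ :=
  -(1 / r ^ n) * deriv (fun s => s ^ n * deriv f s) r + (σ / r ^ 2 - lam) * f r

section radialOp

variable {n : ℕ} {σ lam : ℝ} {f g : ℝ → ℝ} {r : ℝ}

theorem radialOp_add (hf : ContDiffAt ℝ 2 f r) (hg : ContDiffAt ℝ 2 g r) :
    radialOp n σ lam (fun s => f s + g s) r = radialOp n σ lam f r + radialOp n σ lam g r := by
  have hflux : (fun s => s ^ n * deriv (fun y => f y + g y) s) =ᶠ[𝓝 r]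
      fun s => s ^ n * deriv f s + s ^ n * deriv g s := by
    filter_upwards [hf.eventually (by simp), hg.eventually (by simp)] with s hfs hgs
    rw [deriv_fun_add (hfs.differentiableAt (by norm_num)) (hgs.differentiableAt (by norm_num))]
    ring
  have hdf : DifferentiableAt ℝ (deriv f) r :=
    (hf.derivWithin (m := 1) (by norm_num)).differentiableAt (by norm_num)
  have hdg : DifferentiableAt ℝ (deriv g) r :=
    (hg.derivWithin (m := 1) (by norm_num)).differentiableAt (by norm_num)
  simp only [radialOp]
  rw [hflux.deriv_eq, deriv_fun_add ((differentiableAt_pow n).fun_mul hdf)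
    ((differentiableAt_pow n).fun_mul hdg)]
  ring

theorem radialOp_const_mul (a : ℝ) :
    radialOp n σ lam (fun s => a * f s) r = a * radialOp n σ lam f r := by
  have hflux : (fun s => s ^ n * deriv (fun y => a * f y) s) =
      fun s => a * (s ^ n * deriv f s) := by
    funext s
    rw [deriv_const_mul_field']
    ring
  simp only [radialOp]
  rw [hflux, deriv_const_mul_field]
  ring

theorem radialOp_neg : radialOp n σ lam (fun s => -f s) r = -radialOp n σ lam f r := by
  simpa using radialOp_const_mul (n := n) (σ := σ) (lam := lam) (f := f) (r := r) (-1)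

theorem radialOp_sq (hr : r ≠ 0) :
    radialOp n σ lam (fun s => s ^ 2) r = σ - 2 * (n + 1) - lam * r ^ 2 := by
  have hflux : (fun s : ℝ => s ^ n * deriv (fun y => y ^ 2) s) = fun s => 2 * s ^ (n + 1) := by
    funext s
    simp only [deriv_pow_field]
    ring
  simp only [radialOp]
  rw [hflux, deriv_const_mul_field, deriv_pow_field]
  field_simp
  push_cast
  ring

theorem radialOp_inv (hr : r ≠ 0) :
    radialOp n σ lam (fun s => s⁻¹) r = (σ + n - 2 - lam * r ^ 2) / r ^ 3 := by
  have hflux : (fun s : ℝ => s ^ n * deriv (fun y => y⁻¹) s) =ᶠ[𝓝 r]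
      fun s => -s ^ ((n : ℤ) - 2) := by
    filter_upwards [eventually_ne_nhds hr] with s hs
    rw [deriv_inv, zpow_sub₀ hs, zpow_natCast]
    field_simp
  simp only [radialOp]
  rw [hflux.deriv_eq, deriv.fun_neg, deriv_zpow, show (n : ℤ) - 2 - 1 = n - 3 by ring,
    zpow_sub₀ hr, zpow_natCast]
  field_simp
  push_cast
  ring

theorem radialOp_le_of_isLocalMin (hr : 0 < r) (hf : ContDiffAt ℝ 2 f r) (hmin : IsLocalMin f r) :
    radialOp n σ lam f r ≤ (σ / r ^ 2 - lam) * f r := by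
  have hdf : DifferentiableAt ℝ (deriv f) r :=
    (hf.derivWithin (m := 1) (by norm_num)).differentiableAt (by norm_num)
  have hflux : deriv (fun s => s ^ n * deriv f s) r = r ^ n * deriv (deriv f) r := by
    rw [deriv_fun_mul (differentiableAt_pow n) hdf, hmin.deriv_eq_zero]
    ring
  have hconvex : 0 ≤ deriv (deriv f) r :=
    hmin.deriv_deriv_nonneg ((hf.eventually (by simp)).mono fun y hy =>
      hy.differentiableAt (by norm_num))
  have : 0 ≤ 1 / r ^ n * (r ^ n * deriv (deriv f) r) := by positivity
  simp only [radialOp, hflux]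
  linarith

end radialOp

structure IsRadialRobinSolution (n : ℕ) (σ lam δ c : ℝ) (q : ℝ → ℝ) : Prop where
  continuousOn : ContinuousOn q (Icc 0 1)
  contDiffOn : ContDiffOn ℝ 2 q (Ioo 0 1)
  radialOp_eq_zero : ∀ r ∈ Ioo (0 : ℝ) 1, radialOp n σ lam q r = 0
  robin : deriv q 1 + δ * q 1 = c

namespace IsRadialRobinSolution

variable {n : ℕ} {σ lam δ c C ε : ℝ} {q : ℝ → ℝ}

theorem neg (h : IsRadialRobinSolution n σ lam δ c q) :
    IsRadialRobinSolution n σ lam δ (-c) fun r => -q r where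
  continuousOn := h.continuousOn.neg
  contDiffOn := h.contDiffOn.neg
  radialOp_eq_zero r hr := by rw [radialOp_neg, h.radialOp_eq_zero r hr, neg_zero]
  robin := by rw [deriv.fun_neg, ← h.robin]; ring

theorem contDiffAt_add_barrier (h : IsRadialRobinSolution n σ lam δ c q) {r : ℝ}
    (hr : r ∈ Ioo (0 : ℝ) 1) : ContDiffAt ℝ 2 (fun s => q s + C * s ^ 2 + ε * s⁻¹) r :=
  ((h.contDiffOn.contDiffAt (isOpen_Ioo.mem_nhds hr)).add (by fun_prop)).add
    (contDiffAt_const.mul (contDiffAt_inv ℝ hr.1.ne'))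

theorem radialOp_add_barrier (h : IsRadialRobinSolution n σ lam δ c q) {r : ℝ}
    (hr : r ∈ Ioo (0 : ℝ) 1) :
    radialOp n σ lam (fun s => q s + C * s ^ 2 + ε * s⁻¹) r =
      C * (σ - 2 * (n + 1) - lam * r ^ 2) + ε * ((σ + n - 2 - lam * r ^ 2) / r ^ 3) := by
  have hq : ContDiffAt ℝ 2 q r := h.contDiffOn.contDiffAt (isOpen_Ioo.mem_nhds hr)
  rw [radialOp_add (hq.add (by fun_prop)) (contDiffAt_const.mul (contDiffAt_inv ℝ hr.1.ne')),
    radialOp_add hq (by fun_prop), h.radialOp_eq_zero r hr, radialOp_const_mul,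
    radialOp_const_mul, radialOp_sq hr.1.ne', radialOp_inv hr.1.ne', zero_add]

theorem add_barrier_nonneg (h : IsRadialRobinSolution n σ lam δ c q)
    (hσ : ∀ r ∈ Ioo (0 : ℝ) 1, 2 * ((n : ℝ) + 1) < σ - lam * r ^ 2) (hδ : 0 < δ) (hC : 0 < C)
    (hc : -(δ * C) ≤ c) (hε : 0 < ε) (hεC : ε ≤ 2 * C) :
    ∀ r ∈ Ioc (0 : ℝ) 1, 0 ≤ q r + C * r ^ 2 + ε * r⁻¹ := by
  refine nonneg_on_Ioc_of_isLocalMin_nonneg ?_ ?_ ?_ ?_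
  · exact ((h.continuousOn.mono Ioc_subset_Icc_self).add (by fun_prop)).add
      (continuousOn_const.mul (continuousOn_inv₀.mono fun r hr => ne_of_gt hr.1))
  · have hq0 : ∀ᶠ r in 𝓝[>] 0, q 0 - 1 < q r :=
      ((h.continuousOn 0 ⟨le_rfl, zero_le_one⟩).mono_of_mem_nhdsWithin
        (Icc_mem_nhdsGT zero_lt_one)).eventually (eventually_gt_nhds (by linarith))
    filter_upwards [hq0, (tendsto_inv_nhdsGT_zero.const_mul_atTop hε).eventually_gt_atTop
      (1 - q 0), self_mem_nhdsWithin] with r hqr hinv hr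
    nlinarith [mul_nonneg hC.le (sq_nonneg r)]
  · intro r hr hmin
    by_contra! hneg
    have hLpos : 0 < radialOp n σ lam (fun s => q s + C * s ^ 2 + ε * s⁻¹) r := by
      have := hσ r hr
      have : 0 < (σ + n - 2 - lam * r ^ 2) / r ^ 3 := div_pos (by linarith) (pow_pos hr.1 3)
      rw [h.radialOp_add_barrier hr]
      nlinarith
    have hcoef : 0 < σ / r ^ 2 - lam := by
      have := hσ r hr
      rw [div_sub' (pow_pos hr.1 2).ne']
      exact div_pos (by nlinarith) (pow_pos hr.1 2)
    have hle : radialOp n σ lam _ r ≤ _ :=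
      radialOp_le_of_isLocalMin hr.1 (h.contDiffAt_add_barrier hr) hmin
    nlinarith [mul_neg_of_pos_of_neg hcoef hneg]
  · intro hmin
    by_contra! hneg
    simp only [one_pow, inv_one, mul_one] at hneg
    -- also when `q` is not differentiable at `1`, where `deriv q 1 = 0`
    have hq' : deriv q 1 ≤ 0 := by
      by_cases hdiff : DifferentiableAt ℝ q 1
      · have hw : HasDerivAt (fun s => q s + C * s ^ 2 + ε * s⁻¹) (deriv q 1 + 2 * C - ε) 1 :=
          ((hdiff.hasDerivAt.add ((hasDerivAt_pow 2 (1 : ℝ)).const_mul C)).add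
            ((hasDerivAt_inv one_ne_zero).const_mul ε)).congr_deriv (by norm_num; ring)
        have := hw.deriv ▸ deriv_nonpos_of_eventually_le_nhdsLT hmin
        linarith
      · rw [deriv_zero_of_not_differentiableAt hdiff]
    have := h.robin
    nlinarith [mul_pos hδ hε]

theorem neg_mul_sq_le (h : IsRadialRobinSolution n σ lam δ c q)
    (hσ : ∀ r ∈ Ioo (0 : ℝ) 1, 2 * ((n : ℝ) + 1) < σ - lam * r ^ 2) (hδ : 0 < δ) (hC : 0 < C)
    (hc : -(δ * C) ≤ c) : ∀ r ∈ Ioc (0 : ℝ) 1, -(C * r ^ 2) ≤ q r := by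
  intro r hr
  have hlim : Tendsto (fun ε => q r + C * r ^ 2 + ε * r⁻¹) (𝓝[>] 0) (𝓝 (q r + C * r ^ 2)) := by
    have hcont : Continuous fun ε : ℝ => q r + C * r ^ 2 + ε * r⁻¹ := by fun_prop
    simpa using (hcont.tendsto 0).mono_left nhdsWithin_le_nhds
  have := ge_of_tendsto hlim <| by
    filter_upwards [Ioc_mem_nhdsGT (by linarith : (0 : ℝ) < 2 * C)] with ε hε
      using h.add_barrier_nonneg hσ hδ hC hc hε.1 hε.2 r hr
  linarith

theorem abs_le_mul_sq (h : IsRadialRobinSolution n σ lam δ c q)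
    (hσ : ∀ r ∈ Ioo (0 : ℝ) 1, 2 * ((n : ℝ) + 1) < σ - lam * r ^ 2) (hδ : 0 < δ) (hC : 0 < C)
    (hc : |c| ≤ δ * C) : ∀ r ∈ Ioc (0 : ℝ) 1, |q r| ≤ C * r ^ 2 := by
  intro r hr
  have hlower := h.neg_mul_sq_le hσ hδ hC (neg_le_of_abs_le hc) r hr
  have hupper := h.neg.neg_mul_sq_le hσ hδ hC (neg_le_neg (le_of_abs_le hc)) r hr
  exact abs_le.2 ⟨hlower, by linarith⟩

theorem abs_le_two_mul_add_one {lamt M : ℝ}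
    (h : IsRadialRobinSolution n σ lam (1 - 1 / (σ - lamt)) c q) (hlam : 0 ≤ lam)
    (hlamt : lamt ≤ 0) (hσ : 2 * ((n : ℝ) + 1) + lam < σ) (hc : |c| ≤ M) :
    ∀ r ∈ Ioo (0 : ℝ) 1, |q r| ≤ 2 * M + 1 := by
  intro r hr
  have hσr (s : ℝ) (hs : s ∈ Ioo (0 : ℝ) 1) : 2 * ((n : ℝ) + 1) < σ - lam * s ^ 2 := by
    have : lam * s ^ 2 ≤ lam := mul_le_of_le_one_right hlam (pow_le_one₀ hs.1.le hs.2.le)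
    linarith
  have hδ : 1 / 2 ≤ 1 - 1 / (σ - lamt) := by
    have := one_div_le_one_div_of_le two_pos (by linarith : (2 : ℝ) ≤ σ - lamt)
    linarith
  have hM : 0 ≤ M := (abs_nonneg c).trans hc
  calc |q r| ≤ (2 * M + 1) * r ^ 2 :=
        h.abs_le_mul_sq hσr (by linarith) (by positivity) (by nlinarith) r (Ioo_subset_Ioc_self hr)
    _ ≤ 2 * M + 1 := mul_le_of_le_one_right (by positivity) (pow_le_one₀ hr.1.le hr.2.le)

end IsRadialRobinSolution

theorem natCast_le_sigmaLB {d : ℕ} (hd : 2 ≤ d) (k : ℕ) : (k : ℝ) ≤ sigmaLB d k := by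
  have : (2 : ℝ) ≤ d := by exact_mod_cast hd
  rcases k.eq_zero_or_pos with rfl | hk
  · simp [sigmaLB]
  · have : (1 : ℝ) ≤ k := by exact_mod_cast hk
    unfold sigmaLB
    nlinarith

theorem tendsto_sigmaLB_atTop {d : ℕ} (hd : 2 ≤ d) : Tendsto (sigmaLB d) atTop atTop :=
  tendsto_atTop_mono (natCast_le_sigmaLB hd) tendsto_natCast_atTop_atTop

theorem exists_forall_abs_le_of_forall_ge {F : ℕ → ℝ → ℝ} {t : Set ℝ} {C : ℝ} {K : ℕ}
    (hF : ∀ k, ∃ B, ∀ r ∈ t, |F k r| ≤ B) (hK : ∀ k ≥ K, ∀ r ∈ t, |F k r| ≤ C) :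
    ∃ C', ∀ k, ∀ r ∈ t, |F k r| ≤ C' := by
  choose B hB using hF
  obtain ⟨B', hB'⟩ := ((Set.finite_lt_nat K).image B).bddAbove
  refine ⟨max C B', fun k r hr => ?_⟩
  rcases le_or_gt K k with hk | hk
  · exact (hK k hk r hr).trans (le_max_left _ _)
  · exact (hB k r hr).trans ((hB' ⟨k, hk, rfl⟩).trans (le_max_right _ _))

/-- Uniform bounds for the solutions p_k of
−(1/r^{d-1})(r^{d-1}p_k')' + (σ_k/r² − λ̄)p_k = 0 on (0,1) with Robin boundary data
p_k'(1) + d_k p_k(1) = c_k, d_k = 1 − 1/(σ_k − λ̃) > 0, uniformly bounded c_k, and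
0 < λ̄ ≤ Λ: there is C > 0 with |p_k| ≤ C on (0,1) for all large k; in particular
sup_k sup_{(0,1)} |p_k| < ∞. -/
theorem stmt18 (d : ℕ) (hd : 2 ≤ d) (lamb lamt Lam M : ℝ)
    (hlamb : 0 < lamb) (hlamt : lamt < 0) (hLam : lamb ≤ Lam)
    (p : ℕ → ℝ → ℝ) (c : ℕ → ℝ)
    (hM : ∀ k, 1 ≤ k → |c k| ≤ M)
    (hreg : ∀ k, ContinuousOn (p k) (Icc (0 : ℝ) 1))
    (hreg2 : ∀ k, ContDiffOn ℝ 2 (p k) (Ioo (0 : ℝ) 1))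
    (hode : ∀ k, 1 ≤ k → ∀ r ∈ Ioo (0 : ℝ) 1,
      -(1 / r ^ (d - 1)) * deriv (fun s => s ^ (d - 1) * deriv (p k) s) r
        + (sigmaLB d k / r ^ 2 - lamb) * p k r = 0)
    (hbc : ∀ k, 1 ≤ k →
      deriv (p k) 1 + (1 - 1 / (sigmaLB d k - lamt)) * p k 1 = c k) :
    (∃ C : ℝ, 0 < C ∧ ∃ K : ℕ, ∀ k, K ≤ k → ∀ r ∈ Ioo (0 : ℝ) 1, |p k r| ≤ C) ∧
    (∃ C' : ℝ, ∀ k, 1 ≤ k → ∀ r ∈ Ioo (0 : ℝ) 1, |p k r| ≤ C') := by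
  have hM0 : 0 ≤ M := (abs_nonneg _).trans (hM 1 le_rfl)
  have hd' : ((d - 1 : ℕ) : ℝ) + 1 = d := by rw [Nat.cast_sub (by omega)]; ring
  obtain ⟨K, hK⟩ := eventually_atTop.1 ((eventually_ge_atTop 1).and
    ((tendsto_sigmaLB_atTop hd).eventually_gt_atTop (2 * d + Lam)))
  have hbound : ∀ k ≥ K, ∀ r ∈ Ioo (0 : ℝ) 1, |p k r| ≤ 2 * M + 1 := fun k hk => by
    obtain ⟨hk1, hσ⟩ := hK k hk
    exact IsRadialRobinSolution.abs_le_two_mul_add_one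
      ⟨hreg k, hreg2 k, hode k hk1, hbc k hk1⟩ hlamb.le hlamt.le (by rw [hd']; linarith) (hM k hk1)
  have hfinite (k : ℕ) : ∃ B, ∀ r ∈ Ioo (0 : ℝ) 1, |p k r| ≤ B := by
    obtain ⟨B, hB⟩ := isCompact_Icc.exists_bound_of_continuousOn (hreg k)
    exact ⟨B, fun r hr => hB r (Ioo_subset_Icc_self hr)⟩
  obtain ⟨C', hC'⟩ := exists_forall_abs_le_of_forall_ge hfinite hbound
  exact ⟨⟨2 * M + 1, by positivity, K, hbound⟩, C', fun k _ => hC' k⟩
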